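/- Let G be a bipartite graph, M a maximum matching in G, and 𝓤 the set of unreachable vertices with respect to M. Then in every maximum matching N of G, every vertex of 𝓤 is matched, and its partner in N also belongs to 𝓤. -/

import Mathlib

open SimpleGraph

variable {V : Type*}

/-- `M` is a matching in the graph `G`: a set of edges of `G` no two of which
share a vertex. -/
def IsMatchingIn (G : SimpleGraph V) (M : Set (Sym2 V)) : Prop :=
  M ⊆ G.edgeSet ∧ ∀ e ∈ M, ∀ f ∈ M, e ≠ f → ∀ v : V, v ∈ e → v ∉ f

/-- A vertex `v` is matched (covered) by the matching `M`. -/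
def IsMatchedBy (M : Set (Sym2 V)) (v : V) : Prop :=
  ∃ e ∈ M, v ∈ e

/-- The list of edges of a path given as a list of vertices. -/
def pathEdges (p : List V) : List (Sym2 V) :=
  (p.zip p.tail).map fun q => s(q.1, q.2)

/-- `p` is an alternating path from `u` to `v` in `G` with respect to the matching `M`:
its consecutive vertices are adjacent in `G`, it repeats no vertex, and its edges
alternate between edges in `M` and edges not in `M`. -/
def IsAltPath (G : SimpleGraph V) (M : Set (Sym2 V)) (u v : V) (p : List V) : Prop :=
  p.Chain' G.Adj ∧ p.Nodup ∧
    (pathEdges p).Chain' (fun e f => (e ∈ M ↔ f ∉ M)) ∧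
    p.head? = some u ∧ p.getLast? = some v

/-- `v` is even with respect to `M`: there is an even-length alternating path from
an `M`-unmatched vertex to `v`. -/
def EvenVtx (G : SimpleGraph V) (M : Set (Sym2 V)) (v : V) : Prop :=
  ∃ u p, ¬ IsMatchedBy M u ∧ IsAltPath G M u v p ∧ Even (pathEdges p).length

/-- `v` is odd with respect to `M`: there is an odd-length alternating path from
an `M`-unmatched vertex to `v`. -/
def OddVtx (G : SimpleGraph V) (M : Set (Sym2 V)) (v : V) : Prop :=
  ∃ u p, ¬ IsMatchedBy M u ∧ IsAltPath G M u v p ∧ Odd (pathEdges p).length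

/-- `v` is unreachable with respect to `M`: there is no alternating path from any
`M`-unmatched vertex to `v`. -/
def UnreachableVtx (G : SimpleGraph V) (M : Set (Sym2 V)) (v : V) : Prop :=
  ¬ ∃ u p, ¬ IsMatchedBy M u ∧ IsAltPath G M u v p

/-- `M` is a maximum (cardinality) matching in `G`. -/
def IsMaxMatching (G : SimpleGraph V) (M : Set (Sym2 V)) : Prop :=
  IsMatchingIn G M ∧ ∀ N, IsMatchingIn G N → N.ncard ≤ M.ncard

/-- `G` is bipartite with the two sides given by `side`. -/
def IsBipartiteWith (G : SimpleGraph V) (side : V → Bool) : Prop :=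
  ∀ u v, G.Adj u v → side u ≠ side v


/-!
Flipping an even alternating path that starts at an unmatched vertex keeps the size of a
matching, so a vertex that is even for a maximum matching `M` is missed by another maximum
matching `M'`. Conversely, a vertex `v` missed by a maximum matching `Z` is even for every
matching `W`: grow a path from `v` inside `W ∆ Z`. After an odd number of steps its end is
`Z`-matched (otherwise the path is `Z`-augmenting), so it can only get stuck after an even
number of steps at a `W`-unmatched vertex, and read backwards it then shows `v` to be `W`-even.
Hence all maximum matchings have the same even vertices, and also the same reachable ones,
since an odd vertex is adjacent to its even partner. Finally an `N`-unmatched vertex is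
`N`-reachable, and so is the `N`-partner of an `N`-reachable vertex.
-/

open scoped symmDiff

theorem Set.ncard_symmDiff_add_two_mul_ncard_inter {α : Type*} {s t : Set α}
    (hs : s.Finite) (ht : t.Finite) :
    (s ∆ t).ncard + 2 * (s ∩ t).ncard = s.ncard + t.ncard := by
  have hunion : (s ∆ t).ncard = (s \ t).ncard + (t \ s).ncard :=
    Set.ncard_union_eq disjoint_sdiff_sdiff hs.sdiff ht.sdiff
  have hs' := Set.ncard_inter_add_ncard_sdiff_eq_ncard s t hs
  have ht' := Set.ncard_inter_add_ncard_sdiff_eq_ncard t s ht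
  rw [Set.inter_comm] at ht'
  omega

namespace List

variable {α : Type*} {W : Set α}

theorem ncard_setOf_mem_inter_of_isChain_alternating :
    ∀ {l : List α}, l.Nodup → l.IsChain (fun e f => e ∈ W ↔ f ∉ W) →
      (∀ e ∈ l.head?, e ∉ W) → ({e | e ∈ l} ∩ W).ncard = l.length / 2
  | [], _, _, _ => by simp
  | [a], _, _, ha => by
    have : {a} ∩ W = ∅ := Set.singleton_inter_eq_empty.2 (ha a rfl)
    simp [this]
  | a :: b :: l, hnd, hch, ha => by
    have ha : a ∉ W := ha a rfl
    obtain ⟨hab, hbl⟩ := isChain_cons_cons.1 hch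
    have hb : b ∈ W := by tauto
    have hl : ∀ e ∈ l.head?, e ∉ W := fun e he =>
      (isChain_cons.1 hbl).1 e he |>.1 hb
    have hset : {e | e ∈ a :: b :: l} ∩ W = insert b ({e | e ∈ l} ∩ W) := by
      ext e; simp only [mem_cons, Set.mem_inter_iff, Set.mem_ofPred_eq, Set.mem_insert_iff]
      grind
    have hbl' : b ∉ {e | e ∈ l} ∩ W := fun h => (nodup_cons.1 (nodup_cons.1 hnd).2).1 h.1
    rw [hset, Set.ncard_insert_of_notMem hbl' ((l.finite_toSet).inter_of_left W),
      ncard_setOf_mem_inter_of_isChain_alternating (nodup_cons.1 (nodup_cons.1 hnd).2).2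
        (isChain_cons.1 hbl).2 hl]
    simp only [length_cons]
    omega

theorem getLast_mem_iff_even_of_isChain_alternating :
    ∀ {l : List α}, l.IsChain (fun e f => e ∈ W ↔ f ∉ W) →
      (∀ e ∈ l.head?, e ∉ W) → ∀ d ∈ l.getLast?, (d ∈ W ↔ Even l.length)
  | [], _, _, d, hd => by simp at hd
  | [a], _, ha, d, hd => by
    obtain rfl : a = d := by simpa using hd
    simpa using ha a rfl
  | [a, b], hch, ha, d, hd => by
    obtain rfl : b = d := by simpa using hd
    have := ha a rfl
    simp only [isChain_pair] at hch
    exact iff_of_true (by tauto) even_two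
  | a :: b :: c :: l, hch, ha, d, hd => by
    obtain ⟨hab, hbc, hcl⟩ : _ ∧ _ ∧ _ := by simpa using hch
    have hc : c ∉ W := by have := ha a rfl; tauto
    have := getLast_mem_iff_even_of_isChain_alternating (l := c :: l)
      (isChain_cons_cons.1 (isChain_cons_cons.1 hch).2).2 (by simpa using hc) d
      (by simpa using hd)
    rw [this]
    simp [Nat.even_add_one]

end List

@[simp] theorem pathEdges_nil : pathEdges ([] : List V) = [] := rfl

@[simp] theorem pathEdges_singleton (a : V) : pathEdges [a] = [] := rfl

@[simp] theorem pathEdges_cons_cons (a b : V) (l : List V) :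
    pathEdges (a :: b :: l) = s(a, b) :: pathEdges (b :: l) := rfl

theorem mem_of_mem_pathEdges {p : List V} {e : Sym2 V} {x : V}
    (he : e ∈ pathEdges p) (hx : x ∈ e) : x ∈ p := by
  induction p with
  | nil => simp at he
  | cons a l ih =>
    cases l with
    | nil => simp at he
    | cons b l =>
      rcases List.mem_cons.1 he with rfl | he
      · rcases Sym2.mem_iff.1 hx with rfl | rfl <;> simp
      · exact List.mem_cons_of_mem _ (ih he)

theorem nodup_pathEdges {p : List V} (h : p.Nodup) : (pathEdges p).Nodup := by
  induction p with
  | nil => simp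
  | cons a l ih =>
    cases l with
    | nil => simp
    | cons b l =>
      rw [List.nodup_cons] at h
      exact List.nodup_cons.2
        ⟨fun hab => h.1 (mem_of_mem_pathEdges hab (Sym2.mem_mk_left a b)), ih h.2⟩

theorem pathEdges_append_singleton {p : List V} {a : V} (b : V) (ha : p.getLast? = some a) :
    pathEdges (p ++ [b]) = pathEdges p ++ [s(a, b)] := by
  induction p with
  | nil => simp at ha
  | cons c l ih =>
    cases l with
    | nil =>
      obtain rfl : c = a := by simpa using ha
      rfl
    | cons d l =>
      rw [List.getLast?_cons_cons] at ha
      simp only [List.cons_append, pathEdges_cons_cons, ← ih ha]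

theorem pathEdges_reverse (p : List V) : pathEdges p.reverse = (pathEdges p).reverse := by
  induction p with
  | nil => rfl
  | cons a l ih =>
    cases l with
    | nil => rfl
    | cons b l =>
      rw [List.reverse_cons, pathEdges_append_singleton (a := b) a (by simp), ih,
        pathEdges_cons_cons, List.reverse_cons, Sym2.eq_swap]

theorem pathEdges_take (p : List V) (n : ℕ) :
    pathEdges (p.take (n + 1)) = (pathEdges p).take n := by
  induction p generalizing n with
  | nil => simp
  | cons a l ih =>
    cases l with
    | nil => simp
    | cons b l =>
      cases n with
      | zero => simp
      | succ n =>
        have := ih n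
        simp only [List.take_succ_cons, pathEdges_cons_cons] at this ⊢
        rw [this]

theorem mem_of_mem_head?_pathEdges {p : List V} {u : V} {e : Sym2 V} (hu : p.head? = some u)
    (he : e ∈ (pathEdges p).head?) : u ∈ e := by
  match p, hu, he with
  | a :: b :: l, hu, he =>
    obtain rfl : a = u := by simpa using hu
    obtain rfl : s(a, b) = e := by simpa using he
    exact Sym2.mem_mk_left a b

theorem mem_head?_pathEdges_of_mem {p : List V} (hp : p.Nodup) {u : V} {e : Sym2 V}
    (hu : p.head? = some u) (he : e ∈ pathEdges p) (hue : u ∈ e) : e ∈ (pathEdges p).head? := by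
  match p, hu, he with
  | a :: b :: l, hu, he =>
    obtain rfl : a = u := by simpa using hu
    rcases List.mem_cons.1 he with rfl | he
    · rfl
    · exact absurd (mem_of_mem_pathEdges he hue) (List.nodup_cons.1 hp).1

theorem getLast?_reverse_pathEdges (p : List V) :
    (pathEdges p).getLast? = (pathEdges p.reverse).head? := by
  rw [pathEdges_reverse, List.head?_reverse]

theorem mem_of_mem_getLast?_pathEdges {p : List V} {v : V} {e : Sym2 V}
    (hv : p.getLast? = some v) (he : e ∈ (pathEdges p).getLast?) : v ∈ e := by
  rw [getLast?_reverse_pathEdges] at he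
  exact mem_of_mem_head?_pathEdges (by rwa [List.head?_reverse]) he

theorem mem_getLast?_pathEdges_of_mem {p : List V} (hp : p.Nodup) {v : V} {e : Sym2 V}
    (hv : p.getLast? = some v) (he : e ∈ pathEdges p) (hve : v ∈ e) :
    e ∈ (pathEdges p).getLast? := by
  rw [getLast?_reverse_pathEdges]
  exact mem_head?_pathEdges_of_mem (List.nodup_reverse.2 hp) (by rwa [List.head?_reverse])
    (by rwa [pathEdges_reverse, List.mem_reverse]) hve

theorem exists_mem_getLast?_pathEdges {p : List V} {u v : V} (hu : p.head? = some u)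
    (hv : p.getLast? = some v) (huv : u ≠ v) : ∃ d, d ∈ (pathEdges p).getLast? := by
  match p, hu, hv with
  | [a], hu, hv => exact absurd ((Option.some_inj.1 hu).symm.trans (Option.some_inj.1 hv)) huv
  | a :: b :: l, _, _ => exact ⟨_, List.getLast?_eq_some_getLast (List.cons_ne_nil _ _)⟩

theorem mem_edgeSet_of_mem_pathEdges {G : SimpleGraph V} {p : List V} (hp : p.IsChain G.Adj)
    {e : Sym2 V} (he : e ∈ pathEdges p) : e ∈ G.edgeSet := by
  induction p with
  | nil => simp at he
  | cons a l ih =>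
    cases l with
    | nil => simp at he
    | cons b l =>
      rw [List.isChain_cons_cons] at hp
      rcases List.mem_cons.1 he with rfl | he
      · exact hp.1
      · exact ih hp.2 he

section Matching

variable {G : SimpleGraph V} {W Z : Set (Sym2 V)} {u v : V} {p : List V}

theorem isAltPath_singleton (G : SimpleGraph V) (W : Set (Sym2 V)) (v : V) :
    IsAltPath G W v v [v] :=
  ⟨List.isChain_singleton _, List.nodup_singleton v, List.IsChain.nil, rfl, rfl⟩

theorem isAltPath_iff :
    IsAltPath G W u v p ↔ p.IsChain G.Adj ∧ p.Nodup ∧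
      (pathEdges p).IsChain (fun e f => (e ∈ W ↔ f ∉ W)) ∧
      p.head? = some u ∧ p.getLast? = some v :=
  Iff.rfl

theorem isAltPath_cons_cons {a b : V} {l : List V} :
    IsAltPath G W u v (a :: b :: l) ↔
      u = a ∧ G.Adj a b ∧ a ∉ b :: l ∧
        (∀ f ∈ (pathEdges (b :: l)).head?, s(a, b) ∈ W ↔ f ∉ W) ∧
        IsAltPath G W b v (b :: l) := by
  simp only [isAltPath_iff, List.isChain_cons_cons, List.nodup_cons,
    pathEdges_cons_cons, List.isChain_cons (l := pathEdges (b :: l)), List.head?_cons,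
    Option.some_inj, List.getLast?_cons_cons]
  grind

theorem IsMatchingIn.eq_of_mem (hW : IsMatchingIn G W) {e f : Sym2 V} {x : V}
    (he : e ∈ W) (hf : f ∈ W) (hxe : x ∈ e) (hxf : x ∈ f) : e = f := by
  by_contra hne
  exact hW.2 e he f hf hne x hxe hxf

theorem IsMatchingIn.adj (hW : IsMatchingIn G W) {x y : V} (h : s(x, y) ∈ W) : G.Adj x y :=
  hW.1 h

theorem IsMaxMatching.isMatchingIn (hW : IsMaxMatching G W) : IsMatchingIn G W := hW.1

theorem IsMaxMatching.ncard_le (hW : IsMaxMatching G W) {Z : Set (Sym2 V)}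
    (hZ : IsMatchingIn G Z) : Z.ncard ≤ W.ncard :=
  hW.2 Z hZ

namespace IsAltPath

theorem isChain_adj (h : IsAltPath G W u v p) : p.IsChain G.Adj := h.1

theorem nodup (h : IsAltPath G W u v p) : p.Nodup := h.2.1

theorem alternating (h : IsAltPath G W u v p) :
    (pathEdges p).IsChain (fun e f => (e ∈ W ↔ f ∉ W)) :=
  h.2.2.1

theorem head?_eq (h : IsAltPath G W u v p) : p.head? = some u := h.2.2.2.1

theorem getLast?_eq (h : IsAltPath G W u v p) : p.getLast? = some v := h.2.2.2.2

theorem reverse (h : IsAltPath G W u v p) : IsAltPath G W v u p.reverse := by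
  obtain ⟨hc, hnd, hch, hh, hl⟩ := h
  refine ⟨?_, List.nodup_reverse.2 hnd, ?_, by rwa [List.head?_reverse],
    by rwa [List.getLast?_reverse]⟩
  · exact List.isChain_reverse.2 (hc.imp fun _ _ hab => hab.symm)
  · rw [pathEdges_reverse]
    exact List.isChain_reverse.2 (hch.imp fun _ _ hab => by tauto)

theorem append_singleton {x : V} (h : IsAltPath G W u v p) (hadj : G.Adj v x) (hx : x ∉ p)
    (halt : ∀ d ∈ (pathEdges p).getLast?, d ∈ W ↔ s(v, x) ∉ W) :
    IsAltPath G W u x (p ++ [x]) := by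
  obtain ⟨hc, hnd, hch, hh, hl⟩ := h
  refine ⟨List.isChain_append.2 ⟨hc, List.isChain_singleton x, ?_⟩, ?_, ?_, ?_, by simp⟩
  · intro a ha b hb
    obtain rfl : v = a := by simpa [hl] using ha
    obtain rfl : x = b := by simpa using hb
    exact hadj
  · exact List.nodup_append.2 ⟨hnd, List.nodup_singleton x, by grind⟩
  · rw [pathEdges_append_singleton x hl]
    refine List.isChain_append.2 ⟨hch, List.isChain_singleton _, fun d hd f hf => ?_⟩
    obtain rfl : s(v, x) = f := by simpa using hf
    exact halt d hd
  · simp [List.head?_append, hh]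

theorem exists_prefix {x : V} (h : IsAltPath G W u v p) (hx : x ∈ p) :
    ∃ q, IsAltPath G W u x q := by
  obtain ⟨hc, hnd, hch, hh, hl⟩ := h
  obtain ⟨k, hk, rfl⟩ := List.getElem_of_mem hx
  have hpre : p.take (k + 1) <+: p := List.take_prefix _ _
  refine ⟨p.take (k + 1), hc.prefix hpre, hnd.sublist hpre.sublist, ?_, ?_, ?_⟩
  · rw [pathEdges_take]
    exact hch.prefix (List.take_prefix _ _)
  · rw [List.head?_take, if_neg (Nat.succ_ne_zero k), hh]
  · rw [List.getLast?_take, if_neg (Nat.succ_ne_zero k), Nat.add_sub_cancel,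
      List.getElem?_eq_getElem hk, Option.some_or]

theorem of_forall_mem_symmDiff (h : IsAltPath G W u v p)
    (hWZ : ∀ e ∈ pathEdges p, e ∈ W ∆ Z) : IsAltPath G Z u v p := by
  refine ⟨h.isChain_adj, h.nodup, ?_, h.head?_eq, h.getLast?_eq⟩
  refine h.alternating.imp_of_mem_imp fun e f he hf hef => ?_
  have := hWZ e he
  have := hWZ f hf
  simp only [Set.mem_symmDiff] at *
  tauto

theorem notMem_of_mem_head?_pathEdges (h : IsAltPath G W u v p) (hu : ¬ IsMatchedBy W u)
    {f : Sym2 V} (hf : f ∈ (pathEdges p).head?) : f ∉ W :=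
  fun hfW => hu ⟨f, hfW, mem_of_mem_head?_pathEdges h.head?_eq hf⟩

theorem getLast_mem_iff_even (h : IsAltPath G W u v p) (hu : ¬ IsMatchedBy W u)
    {d : Sym2 V} (hd : d ∈ (pathEdges p).getLast?) : d ∈ W ↔ Even (pathEdges p).length :=
  List.getLast_mem_iff_even_of_isChain_alternating h.alternating
    (fun _ => h.notMem_of_mem_head?_pathEdges hu) d hd

theorem ncard_setOf_mem_pathEdges_inter (h : IsAltPath G W u v p) (hu : ¬ IsMatchedBy W u) :
    ({e | e ∈ pathEdges p} ∩ W).ncard = (pathEdges p).length / 2 :=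
  List.ncard_setOf_mem_inter_of_isChain_alternating (nodup_pathEdges h.nodup) h.alternating
    (fun _ => h.notMem_of_mem_head?_pathEdges hu)

theorem exists_mem_pathEdges_of_mem {y : V} (h : IsAltPath G W u v p) (hy : y ∈ p)
    (hyv : y ≠ v) (hyu : y = u → ∀ f ∈ (pathEdges p).head?, f ∈ W) :
    ∃ g ∈ pathEdges p, y ∈ g ∧ g ∈ W := by
  induction p generalizing u with
  | nil => simp at hy
  | cons a l ih =>
    cases l with
    | nil =>
      obtain rfl : a = v := by simpa using h.getLast?_eq
      exact absurd (List.mem_singleton.1 hy) hyv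
    | cons b l =>
      obtain ⟨rfl, -, -, halt, h'⟩ := isAltPath_cons_cons.1 h
      by_cases hyab : y ∈ s(u, b) ∧ s(u, b) ∈ W
      · exact ⟨_, List.mem_cons_self, hyab⟩
      have hyu' : y ≠ u := fun hyu' => hyab ⟨hyu' ▸ Sym2.mem_mk_left _ _, hyu hyu' _ rfl⟩
      obtain ⟨g, hg, hyg, hgW⟩ := ih h' (List.mem_of_ne_of_mem hyu' hy) fun hyb f hf => by
        by_contra hfW
        exact hyab ⟨hyb ▸ Sym2.mem_mk_right _ _, (halt f hf).2 hfW⟩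
      exact ⟨g, List.mem_cons_of_mem _ hg, hyg, hgW⟩

theorem eq_of_mem_pathEdges_of_notMem {e f : Sym2 V} {x : V} (h : IsAltPath G W u v p)
    (he : e ∈ pathEdges p) (hf : f ∈ pathEdges p) (heW : e ∉ W) (hfW : f ∉ W)
    (hxe : x ∈ e) (hxf : x ∈ f) : e = f := by
  induction p generalizing u with
  | nil => simp at he
  | cons a l ih =>
    cases l with
    | nil => simp at he
    | cons b l =>
      obtain ⟨rfl, -, hu, halt, h'⟩ := isAltPath_cons_cons.1 h
      have first_edge : ∀ g ∈ pathEdges (b :: l), g ∉ W → x ∈ s(u, b) → x ∈ g →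
          s(u, b) ∉ W → False := fun g hg hgW hxab hxg habW => by
        rcases Sym2.mem_iff.1 hxab with rfl | rfl
        · exact hu (mem_of_mem_pathEdges hg hxg)
        · exact habW ((halt g (mem_head?_pathEdges_of_mem h'.nodup rfl hg hxg)).2 hgW)
      rw [pathEdges_cons_cons, List.mem_cons] at he hf
      rcases he with rfl | he <;> rcases hf with rfl | hf
      · rfl
      · exact (first_edge f hf hfW hxe hxf heW).elim
      · exact (first_edge e he heW hxf hxe hfW).elim
      · exact ih h' he hf

theorem mem_pathEdges_of_mem_matching (hW : IsMatchingIn G W) (h : IsAltPath G W u v p)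
    {y : V} {e : Sym2 V} (hy : y ∈ p) (hyv : y ≠ v)
    (hyu : y = u → ∀ f ∈ (pathEdges p).head?, f ∈ W) (he : e ∈ W) (hye : y ∈ e) :
    e ∈ pathEdges p := by
  obtain ⟨g, hg, hyg, hgW⟩ := h.exists_mem_pathEdges_of_mem hy hyv hyu
  rwa [hW.eq_of_mem he hgW hye hyg]

theorem mem_getLast?_pathEdges_of_mem_matching (hW : IsMatchingIn G W)
    (h : IsAltPath G W u v p) {y : V} (hy : y ∈ p)
    (hyu : y = u → ∀ f ∈ (pathEdges p).head?, f ∈ W) (he : s(v, y) ∈ W) :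
    s(v, y) ∈ (pathEdges p).getLast? :=
  mem_getLast?_pathEdges_of_mem h.nodup h.getLast?_eq
    (h.mem_pathEdges_of_mem_matching hW hy (hW.adj he).ne.symm hyu he (Sym2.mem_mk_right v y))
    (Sym2.mem_mk_left v y)

theorem isMatchingIn_symmDiff (hW : IsMatchingIn G W) (h : IsAltPath G W u v p)
    (hu : ¬ IsMatchedBy W u)
    (hv : ¬ IsMatchedBy W v ∨ ∀ d ∈ (pathEdges p).getLast?, d ∈ W) :
    IsMatchingIn G (W ∆ {e | e ∈ pathEdges p}) := by
  have cross : ∀ e ∈ W, e ∉ pathEdges p → ∀ f ∈ pathEdges p, ∀ x, x ∈ e → x ∈ f → False := by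
    intro e he hep f hf x hxe hxf
    by_cases hxv : x = v
    · subst hxv
      obtain ⟨d, hd⟩ : ∃ d, d ∈ (pathEdges p).getLast? :=
        ⟨_, List.getLast?_eq_some_getLast (List.ne_nil_of_mem hf)⟩
      refine hv.elim (fun hv => hv ⟨e, he, hxe⟩) fun hv => hep ?_
      rw [hW.eq_of_mem he (hv d hd) hxe (mem_of_mem_getLast?_pathEdges h.getLast?_eq hd)]
      exact List.mem_of_getLast? hd
    · exact hep (h.mem_pathEdges_of_mem_matching hW (mem_of_mem_pathEdges hf hxf) hxv
        (fun hxu => absurd ⟨e, he, hxu ▸ hxe⟩ hu) he hxe)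
  refine ⟨fun e he => ?_, fun e he f hf hne x hxe hxf => ?_⟩
  · rcases he with ⟨he, -⟩ | ⟨he, -⟩
    · exact hW.1 he
    · exact mem_edgeSet_of_mem_pathEdges h.isChain_adj he
  · rcases he with ⟨heW, hep⟩ | ⟨hep, heW⟩ <;> rcases hf with ⟨hfW, hfp⟩ | ⟨hfp, hfW⟩
    · exact hW.2 e heW f hfW hne x hxe hxf
    · exact cross e heW hep f hfp x hxe hxf
    · exact cross f hfW hfp e hep x hxf hxe
    · exact hne (h.eq_of_mem_pathEdges_of_notMem hep hfp heW hfW hxe hxf)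

/-- `W` loses the `⌊n/2⌋` edges of the path that it contains and gains the other `⌈n/2⌉`. -/
theorem ncard_symmDiff (hWfin : W.Finite) (h : IsAltPath G W u v p) (hu : ¬ IsMatchedBy W u) :
    (W ∆ {e | e ∈ pathEdges p}).ncard = W.ncard + (pathEdges p).length % 2 := by
  have hS : {e | e ∈ pathEdges p}.ncard = (pathEdges p).length := by
    classical
    rw [← List.coe_toFinset, Set.ncard_coe_finset,
      List.toFinset_card_of_nodup (nodup_pathEdges h.nodup)]
  have key := Set.ncard_symmDiff_add_two_mul_ncard_inter hWfin (pathEdges p).finite_toSet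
  rw [Set.inter_comm, h.ncard_setOf_mem_pathEdges_inter hu, hS] at key
  omega

theorem not_isMatchedBy_symmDiff (hW : IsMatchingIn G W) (h : IsAltPath G W u v p)
    (hu : ¬ IsMatchedBy W u) (hlast : ∀ d ∈ (pathEdges p).getLast?, d ∈ W) :
    ¬ IsMatchedBy (W ∆ {e | e ∈ pathEdges p}) v := by
  rintro ⟨e, ⟨heW, hep⟩ | ⟨hep, heW⟩, hve⟩
  · have huv : u ≠ v := fun huv => hu ⟨e, heW, huv ▸ hve⟩
    obtain ⟨d, hd⟩ := exists_mem_getLast?_pathEdges h.head?_eq h.getLast?_eq huv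
    rw [hW.eq_of_mem heW (hlast d hd) hve (mem_of_mem_getLast?_pathEdges h.getLast?_eq hd)] at hep
    exact hep (List.mem_of_getLast? hd)
  · exact heW (hlast e (mem_getLast?_pathEdges_of_mem h.nodup h.getLast?_eq hep hve))

theorem exists_isAltPath_of_adj (hW : IsMatchingIn G W) (h : IsAltPath G W u v p) {x : V}
    (hadj : G.Adj v x) (hx : ∀ d ∈ (pathEdges p).getLast?, d ∉ W → s(v, x) ∈ W) :
    ∃ q, IsAltPath G W u x q := by
  by_cases hxp : x ∈ p
  · exact h.exists_prefix hxp
  refine ⟨p ++ [x], h.append_singleton hadj hxp fun d hd => ?_⟩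
  by_cases hdW : d ∈ W
  · have hvx : s(v, x) ∉ W := fun hvx => hxp <| mem_of_mem_pathEdges (List.mem_of_getLast? hd) <|
      hW.eq_of_mem hvx hdW (Sym2.mem_mk_left v x) (mem_of_mem_getLast?_pathEdges h.getLast?_eq hd) ▸
        Sym2.mem_mk_right v x
    exact iff_of_true hdW hvx
  · exact iff_of_false hdW (not_not.2 (hx d hd hdW))

theorem append_singleton_of_mem_symmDiff (h : IsAltPath G W u v p)
    (hWZ : ∀ e ∈ pathEdges p, e ∈ W ∆ Z) {y : V} (hadj : G.Adj v y) (hy : y ∉ p)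
    (halt : ∀ d ∈ (pathEdges p).getLast?, d ∈ W ↔ s(v, y) ∉ W) (hvy : s(v, y) ∈ W ∆ Z) :
    IsAltPath G W u y (p ++ [y]) ∧ ∀ e ∈ pathEdges (p ++ [y]), e ∈ W ∆ Z := by
  refine ⟨h.append_singleton hadj hy halt, fun e he => ?_⟩
  rw [pathEdges_append_singleton y h.getLast?_eq, List.mem_append, List.mem_singleton] at he
  exact he.elim (hWZ e) (· ▸ hvy)

theorem exists_append_of_even (hW : IsMatchingIn G W) (hZ : IsMatchingIn G Z)
    (hu : ¬ IsMatchedBy Z u) (h : IsAltPath G W u v p) (hWZ : ∀ e ∈ pathEdges p, e ∈ W ∆ Z)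
    (heven : Even (pathEdges p).length) {y : V} (hvy : s(v, y) ∈ W) :
    ∃ y, IsAltPath G W u y (p ++ [y]) ∧ ∀ e ∈ pathEdges (p ++ [y]), e ∈ W ∆ Z := by
  have hZp := h.of_forall_mem_symmDiff hWZ
  have hlast : ∀ d ∈ (pathEdges p).getLast?, d ∈ Z ∧ d ∉ W := fun d hd =>
    have hdZ := (hZp.getLast_mem_iff_even hu hd).2 heven
    ⟨hdZ, fun hdW => (hWZ d (List.mem_of_getLast? hd)).elim (·.2 hdZ) (·.2 hdW)⟩
  have hfirst : ∀ f ∈ (pathEdges p).head?, f ∈ W := fun f hf =>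
    ((hWZ f (List.mem_of_mem_head? hf)).resolve_right
      fun hfZ => hZp.notMem_of_mem_head?_pathEdges hu hf hfZ.1).1
  have hyp : y ∉ p := fun hyp =>
    (hlast _ (h.mem_getLast?_pathEdges_of_mem_matching hW hyp (fun _ => hfirst) hvy)).2 hvy
  have hvyZ : s(v, y) ∉ Z := by
    intro hvyZ
    by_cases huv : u = v
    · exact hu ⟨_, hvyZ, huv ▸ Sym2.mem_mk_left v y⟩
    obtain ⟨d, hd⟩ := exists_mem_getLast?_pathEdges h.head?_eq h.getLast?_eq huv
    have := hZ.eq_of_mem hvyZ (hlast d hd).1 (Sym2.mem_mk_left v y)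
      (mem_of_mem_getLast?_pathEdges h.getLast?_eq hd)
    exact (hlast d hd).2 (this ▸ hvy)
  exact ⟨y, h.append_singleton_of_mem_symmDiff hWZ (hW.adj hvy) hyp
    (fun d hd => iff_of_false (hlast d hd).2 (not_not.2 hvy)) (Or.inl ⟨hvy, hvyZ⟩)⟩

theorem exists_append_of_odd (hW : IsMatchingIn G W) (hZ : IsMatchingIn G Z)
    (hu : ¬ IsMatchedBy Z u) (h : IsAltPath G W u v p) (hWZ : ∀ e ∈ pathEdges p, e ∈ W ∆ Z)
    (hodd : Odd (pathEdges p).length) {y : V} (hvy : s(v, y) ∈ Z) :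
    ∃ y, IsAltPath G W u y (p ++ [y]) ∧ ∀ e ∈ pathEdges (p ++ [y]), e ∈ W ∆ Z := by
  have hZp := h.of_forall_mem_symmDiff hWZ
  obtain ⟨d, hd⟩ : ∃ d, d ∈ (pathEdges p).getLast? :=
    ⟨_, List.getLast?_eq_some_getLast (List.ne_nil_of_length_pos hodd.pos)⟩
  have hdZ : d ∉ Z := fun hdZ =>
    Nat.not_even_iff_odd.2 hodd ((hZp.getLast_mem_iff_even hu hd).1 hdZ)
  have hdW : d ∈ W := ((hWZ d (List.mem_of_getLast? hd)).resolve_right fun h => hdZ h.1).1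
  have hyp : y ∉ p := fun hyp => hdZ <| Option.mem_unique
    (hZp.mem_getLast?_pathEdges_of_mem_matching hZ hyp
      (fun hyu => absurd ⟨_, hvy, hyu ▸ Sym2.mem_mk_right v y⟩ hu) hvy) hd ▸ hvy
  have hvyW : s(v, y) ∉ W := fun hvyW => hdZ <|
    hW.eq_of_mem hvyW hdW (Sym2.mem_mk_left v y) (mem_of_mem_getLast?_pathEdges h.getLast?_eq hd) ▸
      hvy
  refine ⟨y, h.append_singleton_of_mem_symmDiff hWZ (hZ.adj hvy) hyp (fun d' hd' => ?_)
    (Or.inr ⟨hvy, hvyW⟩)⟩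
  obtain rfl := Option.mem_unique hd' hd
  exact iff_of_true hdW hvyW

end IsAltPath

end Matching

-- `UnreachableVtx G M v` unfolds to `¬ IsAltReachable G M v`.
def IsAltReachable (G : SimpleGraph V) (M : Set (Sym2 V)) (v : V) : Prop :=
  ∃ u p, ¬ IsMatchedBy M u ∧ IsAltPath G M u v p

namespace IsMaxMatching

variable [Finite V] {G : SimpleGraph V} {M N : Set (Sym2 V)} {u v x : V} {p : List V}

theorem not_isAltPath_of_odd (hM : IsMaxMatching G M) (h : IsAltPath G M u v p)
    (hu : ¬ IsMatchedBy M u) (hv : ¬ IsMatchedBy M v) (hodd : Odd (pathEdges p).length) :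
    False := by
  have hcard := h.ncard_symmDiff (Set.toFinite M) hu
  have := hM.ncard_le (h.isMatchingIn_symmDiff hM.isMatchingIn hu (Or.inl hv))
  rw [Nat.odd_iff.1 hodd] at hcard
  omega

theorem exists_not_isMatchedBy_of_evenVtx (hM : IsMaxMatching G M) (hx : EvenVtx G M x) :
    ∃ M', IsMaxMatching G M' ∧ ¬ IsMatchedBy M' x := by
  obtain ⟨u, p, hu, h, heven⟩ := hx
  have hlast : ∀ d ∈ (pathEdges p).getLast?, d ∈ M := fun d hd =>
    (h.getLast_mem_iff_even hu hd).2 heven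
  have hcard := h.ncard_symmDiff (Set.toFinite M) hu
  rw [Nat.even_iff.1 heven, add_zero] at hcard
  refine ⟨_, ⟨h.isMatchingIn_symmDiff hM.isMatchingIn hu (Or.inr hlast), fun N hN => ?_⟩,
    h.not_isMatchedBy_symmDiff hM.isMatchingIn hu hlast⟩
  exact hcard ▸ hM.ncard_le hN

theorem evenVtx_of_not_isMatchedBy {W Z : Set (Sym2 V)} (hW : IsMatchingIn G W)
    (hZ : IsMaxMatching G Z) (hv : ¬ IsMatchedBy Z v) : EvenVtx G W v := by
  by_contra hnot
  have step : ∀ t p, IsAltPath G W v t p → (∀ e ∈ pathEdges p, e ∈ W ∆ Z) →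
      ∃ y, IsAltPath G W v y (p ++ [y]) ∧ ∀ e ∈ pathEdges (p ++ [y]), e ∈ W ∆ Z := by
    intro t p h hWZ
    rcases Nat.even_or_odd (pathEdges p).length with heven | hodd
    · by_cases htW : IsMatchedBy W t
      · obtain ⟨e, he, hte⟩ := htW
        obtain ⟨y, rfl⟩ := Sym2.mem_iff_exists.1 hte
        exact h.exists_append_of_even hW hZ.isMatchingIn hv hWZ heven he
      · exact absurd ⟨t, p.reverse, htW, h.reverse,
          by rwa [pathEdges_reverse, List.length_reverse]⟩ hnot
    · by_cases htZ : IsMatchedBy Z t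
      · obtain ⟨e, he, hte⟩ := htZ
        obtain ⟨y, rfl⟩ := Sym2.mem_iff_exists.1 hte
        exact h.exists_append_of_odd hW hZ.isMatchingIn hv hWZ hodd he
      · exact (hZ.not_isAltPath_of_odd (h.of_forall_mem_symmDiff hWZ) hv htZ hodd).elim
  have long : ∀ n, ∃ t p, IsAltPath G W v t p ∧ (∀ e ∈ pathEdges p, e ∈ W ∆ Z) ∧
      n < p.length := by
    intro n
    induction n with
    | zero => exact ⟨v, [v], isAltPath_singleton G W v, by simp, by simp⟩
    | succ n ih =>
      obtain ⟨t, p, h, hWZ, hn⟩ := ih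
      obtain ⟨y, h', hWZ'⟩ := step t p h hWZ
      exact ⟨y, p ++ [y], h', hWZ', by simpa using hn⟩
  obtain ⟨t, p, h, -, hn⟩ := long (Nat.card V)
  exact absurd h.nodup.length_le_natCard (Nat.not_le.2 hn)

theorem evenVtx (hM : IsMaxMatching G M) (hN : IsMaxMatching G N) (hx : EvenVtx G M x) :
    EvenVtx G N x := by
  obtain ⟨M', hM', hxM'⟩ := hM.exists_not_isMatchedBy_of_evenVtx hx
  exact evenVtx_of_not_isMatchedBy hN.isMatchingIn hM' hxM'

theorem isAltReachable (hM : IsMaxMatching G M) (hN : IsMaxMatching G N)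
    (hx : IsAltReachable G M x) : IsAltReachable G N x := by
  have reachable_of_even : ∀ {y}, EvenVtx G M y → IsAltReachable G N y := fun hy => by
    obtain ⟨u', q, hu', hq, -⟩ := hM.evenVtx hN hy
    exact ⟨u', q, hu', hq⟩
  obtain ⟨u, p, hu, h⟩ := hx
  rcases Nat.even_or_odd (pathEdges p).length with heven | hodd
  · exact reachable_of_even ⟨u, p, hu, h, heven⟩
  by_cases hxM : IsMatchedBy M x
  swap
  · exact reachable_of_even ⟨x, [x], hxM, isAltPath_singleton G M x, by simp⟩
  -- the `M`-partner `x'` of `x` is `M`-even, hence `N`-even, and `x` is adjacent to it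
  obtain ⟨e, he, hxe⟩ := hxM
  obtain ⟨x', rfl⟩ := Sym2.mem_iff_exists.1 hxe
  have hlast : ∀ d ∈ (pathEdges p).getLast?, d ∉ M := fun d hd hdM =>
    Nat.not_even_iff_odd.2 hodd ((h.getLast_mem_iff_even hu hd).1 hdM)
  have hx'p : x' ∉ p := fun hx'p => hlast _
    (h.mem_getLast?_pathEdges_of_mem_matching hM.isMatchingIn hx'p
      (fun hx'u => absurd ⟨_, he, hx'u ▸ Sym2.mem_mk_right x x'⟩ hu) he) he
  have hx'even : EvenVtx G M x' := ⟨u, p ++ [x'], hu,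
    h.append_singleton (hM.isMatchingIn.adj he) hx'p
      fun d hd => iff_of_false (hlast d hd) (not_not.2 he),
    by rw [pathEdges_append_singleton x' h.getLast?_eq, List.length_append]; exact hodd.add_one⟩
  obtain ⟨u', q, hu', hq, hqeven⟩ := hM.evenVtx hN hx'even
  obtain ⟨q', hq'⟩ := hq.exists_isAltPath_of_adj hN.isMatchingIn (hM.isMatchingIn.adj he).symm
    fun d hd hdN => absurd ((hq.getLast_mem_iff_even hu' hd).2 hqeven) hdN
  exact ⟨u', q', hu', hq'⟩

end IsMaxMatching

theorem unreachable_vertex_matched_to_unreachable_general [Fintype V]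
    (G : SimpleGraph V)
    (M : Set (Sym2 V)) (hM : IsMaxMatching G M)
    (N : Set (Sym2 V)) (hN : IsMaxMatching G N)
    (v : V) (hv : UnreachableVtx G M v) :
    IsMatchedBy N v ∧ ∀ w, s(v, w) ∈ N → UnreachableVtx G M w := by
  constructor
  · by_contra hvN
    exact hv (hN.isAltReachable hM ⟨v, [v], hvN, isAltPath_singleton G N v⟩)
  · intro w hw hwM
    obtain ⟨u, q, hu, hq⟩ := hM.isAltReachable hN hwM
    obtain ⟨q', hq'⟩ := hq.exists_isAltPath_of_adj hN.isMatchingIn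
      (hN.isMatchingIn.adj hw).symm fun _ _ _ => Sym2.eq_swap ▸ hw
    exact hv (hN.isAltReachable hM ⟨u, q', hu, hq'⟩)

/-- In every maximum matching `N`, every unreachable vertex (with
respect to a fixed maximum matching `M`) is matched, and its partner in `N` is
also unreachable. -/
theorem unreachable_vertex_matched_to_unreachable [Fintype V]
    (G : SimpleGraph V) (side : V → Bool) (hbip : IsBipartiteWith G side)
    (M : Set (Sym2 V)) (hM : IsMaxMatching G M)
    (N : Set (Sym2 V)) (hN : IsMaxMatching G N)
    (v : V) (hv : UnreachableVtx G M v) :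
    IsMatchedBy N v ∧ ∀ w, s(v, w) ∈ N → UnreachableVtx G M w :=
  unreachable_vertex_matched_to_unreachable_general G M hM N hN v hv
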